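/- arXiv:2109.09114 — 4 statements merged into one kernel-verified Lean document; each statement's English description precedes it below -/
import Mathlib

section
/- Let A be a real symmetric n×n matrix and B a real skew-symmetric n×n matrix, H = A + iB, and C = [[A, B], [Bᵀ, A]]. Then the smallest eigenvalue of C equals the smallest eigenvalue of H. -/
open Matrix

/-- Rayleigh lower bound: the smallest eigenvalue of a Hermitian matrix is at most
the Rayleigh quotient of any unit vector. -/
lemma aux_rayleigh_lb {𝕜 : Type*} [RCLike 𝕜] {m : Type*} [Fintype m] [Nonempty m]
    [DecidableEq m] {M : Matrix m m 𝕜} (hM : M.IsHermitian) (x : m → 𝕜)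
    (hx : RCLike.re (star x ⬝ᵥ x) = 1) :
    (⨅ i, hM.eigenvalues i) ≤ RCLike.re (star x ⬝ᵥ (M *ᵥ x)) := by
  set U : Matrix m m 𝕜 := (hM.eigenvectorUnitary : Matrix m m 𝕜) with hU
  set y : m → 𝕜 := star U *ᵥ x with hy
  have hsy : star y = star x ᵥ* U := by
    rw [hy, star_mulVec, ← Matrix.star_eq_conjTranspose, star_star]
  have key : star x ⬝ᵥ (M *ᵥ x)
      = star y ⬝ᵥ ((diagonal (RCLike.ofReal ∘ hM.eigenvalues)) *ᵥ y) := by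
    conv_lhs => rw [hM.spectral_theorem, Unitary.conjStarAlgAut_apply]
    rw [← mulVec_mulVec, ← mulVec_mulVec, dotProduct_mulVec, ← hsy]
  have hyy : star y ⬝ᵥ y = star x ⬝ᵥ x := by
    rw [hsy, hy, ← dotProduct_mulVec, mulVec_mulVec,
      Matrix.mem_unitaryGroup_iff.mp hM.eigenvectorUnitary.2, one_mulVec]
  have hyn : ∑ i, ‖y i‖ ^ 2 = 1 := by
    have h : RCLike.re (star y ⬝ᵥ y) = 1 := by rw [hyy, hx]
    rw [← h]
    simp only [dotProduct, Pi.star_apply, RCLike.star_def, RCLike.conj_mul,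
      ← RCLike.ofReal_pow, map_sum, RCLike.ofReal_re]
  have key2 : RCLike.re (star x ⬝ᵥ (M *ᵥ x)) = ∑ i, hM.eigenvalues i * ‖y i‖ ^ 2 := by
    rw [key]
    simp only [dotProduct, mulVec_diagonal, Pi.star_apply, Function.comp_apply, map_sum]
    refine Finset.sum_congr rfl fun i _ => ?_
    rw [mul_comm (star (y i)), mul_assoc, RCLike.star_def, RCLike.mul_conj]
    rw [← RCLike.ofReal_pow, ← RCLike.ofReal_mul, RCLike.ofReal_re]
  rw [key2]
  have hbdd : BddBelow (Set.range hM.eigenvalues) :=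
    Set.Finite.bddBelow (Set.finite_range _)
  calc (⨅ i, hM.eigenvalues i) = ∑ i, (⨅ j, hM.eigenvalues j) * ‖y i‖ ^ 2 := by
        rw [← Finset.mul_sum, hyn, mul_one]
    _ ≤ ∑ i, hM.eigenvalues i * ‖y i‖ ^ 2 :=
        Finset.sum_le_sum fun i _ =>
          mul_le_mul_of_nonneg_right (ciInf_le hbdd i) (sq_nonneg _)

/-- Eigenvectors of the orthonormal eigenbasis are unit vectors (dot-product form). -/
lemma aux_unit {𝕜 : Type*} [RCLike 𝕜] {m : Type*} [Fintype m] [DecidableEq m]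
    {M : Matrix m m 𝕜} (hM : M.IsHermitian) (i : m) :
    RCLike.re (star (⇑(hM.eigenvectorBasis i)) ⬝ᵥ ⇑(hM.eigenvectorBasis i)) = 1 := by
  have h := hM.eigenvectorBasis.orthonormal.1 i
  have h2 : (inner 𝕜 (hM.eigenvectorBasis i) (hM.eigenvectorBasis i) : 𝕜)
      = star (⇑(hM.eigenvectorBasis i)) ⬝ᵥ ⇑(hM.eigenvectorBasis i) :=
    by rw [EuclideanSpace.inner_eq_star_dotProduct, dotProduct_comm]
  rw [← h2, inner_self_eq_norm_sq_to_K, h]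
  simp

theorem stmt_2_quadform (n : ℕ) (A B : Matrix (Fin n) (Fin n) ℝ)
    (hA : A.IsSymm) (hB : Bᵀ = -B)
    (H : Matrix (Fin n) (Fin n) ℂ)
    (hH : H = A.map (fun x => (x : ℂ)) + Complex.I • B.map (fun x => (x : ℂ)))
    (C : Matrix (Fin n ⊕ Fin n) (Fin n ⊕ Fin n) ℝ)
    (hC : C = Matrix.fromBlocks A B Bᵀ A)
    (x y : Fin n → ℝ) :
    Complex.re (star (fun k => (x k : ℂ) - (y k : ℂ) * Complex.I)
        ⬝ᵥ (H *ᵥ (fun k => (x k : ℂ) - (y k : ℂ) * Complex.I)))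
      = star (Sum.elim x y) ⬝ᵥ (C *ᵥ Sum.elim x y) := by
  subst hH hC
  rw [hB]
  simp only [dotProduct, mulVec, Pi.star_apply, star_trivial,
    Fintype.sum_sum_type, Sum.elim_inl, Sum.elim_inr,
    Matrix.fromBlocks_apply₁₁, Matrix.fromBlocks_apply₁₂,
    Matrix.fromBlocks_apply₂₁, Matrix.fromBlocks_apply₂₂,
    Matrix.add_apply, Matrix.smul_apply, Matrix.map_apply, Matrix.neg_apply,
    Complex.re_sum, smul_eq_mul]
  rw [← Finset.sum_add_distrib]
  refine Finset.sum_congr rfl fun j _ => ?_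
  simp only [Complex.re_sum, mul_add, Finset.mul_sum, ← Finset.sum_add_distrib]
  refine Finset.sum_congr rfl fun k _ => ?_
  simp only [Complex.star_def, Complex.mul_re, Complex.mul_im, Complex.conj_re,
    Complex.conj_im, Complex.sub_re, Complex.sub_im, Complex.add_re, Complex.add_im,
    Complex.ofReal_re, Complex.ofReal_im, Complex.I_re, Complex.I_im]
  ring

theorem stmt_2_norm (n : ℕ) (x y : Fin n → ℝ) :
    Complex.re (star (fun k => (x k : ℂ) - (y k : ℂ) * Complex.I)
        ⬝ᵥ (fun k => (x k : ℂ) - (y k : ℂ) * Complex.I))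
      = star (Sum.elim x y) ⬝ᵥ (Sum.elim x y) := by
  simp only [dotProduct, Pi.star_apply, star_trivial, Fintype.sum_sum_type,
    Sum.elim_inl, Sum.elim_inr, Complex.re_sum]
  rw [← Finset.sum_add_distrib]
  refine Finset.sum_congr rfl fun j _ => ?_
  simp only [Complex.star_def, Complex.mul_re, Complex.mul_im, Complex.conj_re,
    Complex.conj_im, Complex.sub_re, Complex.sub_im, Complex.ofReal_re,
    Complex.ofReal_im, Complex.I_re, Complex.I_im]
  ring

/-- For `A` real symmetric, `B` real skew-symmetric, `H = A + iB` and
`C = [[A, B],[Bᵀ, A]]`, the smallest eigenvalue of `C` equals the smallest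
eigenvalue of `H`. -/
theorem stmt_2 (n : ℕ) (hn : 0 < n) (A B : Matrix (Fin n) (Fin n) ℝ)
    (hA : A.IsSymm) (hB : Bᵀ = -B)
    (H : Matrix (Fin n) (Fin n) ℂ)
    (hH : H = A.map (fun x => (x : ℂ)) + Complex.I • B.map (fun x => (x : ℂ)))
    (C : Matrix (Fin n ⊕ Fin n) (Fin n ⊕ Fin n) ℝ)
    (hC : C = Matrix.fromBlocks A B Bᵀ A)
    (hHh : H.IsHermitian) (hCh : C.IsHermitian) :
    (⨅ i, hCh.eigenvalues i) = ⨅ j, hHh.eigenvalues j := by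
  have : Nonempty (Fin n) := ⟨⟨0, hn⟩⟩
  apply le_antisymm
  · refine le_ciInf fun j => ?_
    set v : Fin n → ℂ := ⇑(hHh.eigenvectorBasis j) with hv
    set x : Fin n → ℝ := fun k => (v k).re with hx
    set y : Fin n → ℝ := fun k => -((v k).im) with hy'
    have hz : (fun k => (x k : ℂ) - (y k : ℂ) * Complex.I) = v := by
      funext k
      apply Complex.ext <;> simp [hx, hy']
    have hq := stmt_2_quadform n A B hA hB H hH C hC x y
    have hnrm := stmt_2_norm n x y
    rw [hz] at hq hnrm
    have hu := aux_unit hHh j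
    rw [RCLike.re_to_complex, ← hv] at hu
    have hunit : RCLike.re (star (Sum.elim x y) ⬝ᵥ (Sum.elim x y)) = 1 := by
      rw [RCLike.re_to_real, ← hnrm, hu]
    have h1 := aux_rayleigh_lb hCh (Sum.elim x y) hunit
    rw [RCLike.re_to_real] at h1
    have he : hHh.eigenvalues j = Complex.re (star v ⬝ᵥ (H *ᵥ v)) := by
      have := hHh.eigenvalues_eq j
      rw [RCLike.re_to_complex] at this
      rw [← hv] at this
      exact this
    calc (⨅ i, hCh.eigenvalues i)
        ≤ star (Sum.elim x y) ⬝ᵥ (C *ᵥ Sum.elim x y) := h1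
      _ = hHh.eigenvalues j := by rw [← hq, he]
  · refine le_ciInf fun i => ?_
    set w : (Fin n ⊕ Fin n) → ℝ := ⇑(hCh.eigenvectorBasis i) with hw
    set x : Fin n → ℝ := fun k => w (Sum.inl k) with hx
    set y : Fin n → ℝ := fun k => w (Sum.inr k) with hy'
    have hwe : Sum.elim x y = w := by
      funext p; cases p <;> rfl
    set z : Fin n → ℂ := fun k => (x k : ℂ) - (y k : ℂ) * Complex.I with hz
    have hq := stmt_2_quadform n A B hA hB H hH C hC x y
    have hnrm := stmt_2_norm n x y
    rw [hwe] at hq hnrm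
    have hu := aux_unit hCh i
    rw [RCLike.re_to_real, ← hw] at hu
    have hunit : RCLike.re (star z ⬝ᵥ z) = 1 := by
      rw [RCLike.re_to_complex, hz, hnrm]
      simpa using hu
    have h1 := aux_rayleigh_lb hHh z hunit
    rw [RCLike.re_to_complex] at h1
    have he : hCh.eigenvalues i = star w ⬝ᵥ (C *ᵥ w) := by
      have := hCh.eigenvalues_eq i
      rw [RCLike.re_to_real] at this
      rw [← hw] at this
      exact this
    calc (⨅ j, hHh.eigenvalues j)
        ≤ Complex.re (star z ⬝ᵥ (H *ᵥ z)) := h1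
      _ = hCh.eigenvalues i := by rw [hz, hq, he]
end

section
/- Let Δ be a digraph with Hermitian adjacency matrix H(Δ) = A + iB (A symmetric 0-1, B skew-symmetric with entries in {0,±1}), and let 𝒮(Δ) be the associated signed graph with adjacency matrix C = [[A, B],[Bᵀ, A]]. If the underlying graph structure makes 𝒮(Δ) disconnected with two components S₁ and S₂, i.e., if there is a partition of the 2n indices into two sets each meeting the blocks as {W, complement-pattern}, then each component's adjacency matrix is unitarily conjugate (by a diagonal matrix with entries in {1, i} and a permutation) to H(Δ); in particular H(Δ), A(S₁), and A(S₂) all have the same spectrum. -/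
open Matrix Polynomial

lemma charpoly_conj_aux {n : Type*} [Fintype n] [DecidableEq n] {R : Type*} [CommRing R]
    (P Q M : Matrix n n R) (h1 : Q * P = 1) (h2 : P * Q = 1) :
    (Q * M * P).charpoly = M.charpoly := by
  have hmap1 : (Q.map (C : R →+* R[X])) * (P.map C) = 1 := by
    rw [← Matrix.map_mul, h1]; simp [Matrix.map_one]
  have hmap2 : (P.map (C : R →+* R[X])) * (Q.map C) = 1 := by
    rw [← Matrix.map_mul, h2]; simp [Matrix.map_one]
  have key : charmatrix (Q * M * P) = (Q.map C) * charmatrix M * (P.map C) := by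
    rw [charmatrix, charmatrix]
    rw [Matrix.mul_sub, Matrix.sub_mul]
    congr 1
    · rw [Matrix.scalar_apply, show (Matrix.diagonal fun _ : n => (X : R[X])) = (X : R[X]) • 1
        from by rw [Matrix.smul_one_eq_diagonal], Matrix.mul_smul, Matrix.mul_one,
        Matrix.smul_mul, hmap1]
    · simp only [RingHom.mapMatrix_apply, Matrix.map_mul]
  rw [Matrix.charpoly, key, Matrix.det_mul, Matrix.det_mul, Matrix.charpoly]
  have hdet : (Q.map (C : R →+* R[X])).det * (P.map C).det = 1 := by
    rw [← Matrix.det_mul, hmap1, Matrix.det_one]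
  calc (Q.map (C : R →+* R[X])).det * (charmatrix M).det * (P.map C).det
      = (Q.map C).det * (P.map C).det * (charmatrix M).det := by ring
    _ = (charmatrix M).det := by rw [hdet, one_mul]

/-- If the associated signed graph of a digraph is disconnected, its two components
have adjacency matrices `[[A₁, ±B₁],[±B₁ᵀ, A₂]]`, each of which is conjugate, by a
diagonal matrix with entries in `{1, i}`, to the Hermitian adjacency matrix
`H = [[A₁, iB₁],[−iB₁ᵀ, A₂]]`; in particular all three matrices have the same
characteristic polynomial, hence the same spectrum. -/
theorem stmt_14 (n₁ n₂ : ℕ)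
    (A₁ : Matrix (Fin n₁) (Fin n₁) ℝ) (A₂ : Matrix (Fin n₂) (Fin n₂) ℝ)
    (B₁ : Matrix (Fin n₁) (Fin n₂) ℝ)
    (hA₁ : A₁.IsSymm) (hA₂ : A₂.IsSymm)
    (hA₁ent : ∀ j k, A₁ j k ∈ ({0, 1} : Set ℝ))
    (hA₂ent : ∀ j k, A₂ j k ∈ ({0, 1} : Set ℝ))
    (hB₁ent : ∀ j k, B₁ j k ∈ ({0, 1, -1} : Set ℝ))
    (H : Matrix (Fin n₁ ⊕ Fin n₂) (Fin n₁ ⊕ Fin n₂) ℂ)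
    (hH : H = Matrix.fromBlocks (A₁.map (fun x => (x : ℂ)))
      (Complex.I • B₁.map (fun x => (x : ℂ)))
      (-Complex.I • B₁ᵀ.map (fun x => (x : ℂ))) (A₂.map (fun x => (x : ℂ))))
    (S₁ S₂ : Matrix (Fin n₁ ⊕ Fin n₂) (Fin n₁ ⊕ Fin n₂) ℝ)
    (hS₁ : S₁ = Matrix.fromBlocks A₁ B₁ B₁ᵀ A₂)
    (hS₂ : S₂ = Matrix.fromBlocks A₁ (-B₁) (-B₁ᵀ) A₂) :
    (∃ d : Fin n₁ ⊕ Fin n₂ → ℂ, (∀ x, d x ∈ ({1, Complex.I} : Set ℂ)) ∧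
      (Matrix.diagonal d)ᴴ * S₁.map (fun x => (x : ℂ)) * Matrix.diagonal d = H) ∧
    (∃ d : Fin n₁ ⊕ Fin n₂ → ℂ, (∀ x, d x ∈ ({1, Complex.I} : Set ℂ)) ∧
      (Matrix.diagonal d)ᴴ * S₂.map (fun x => (x : ℂ)) * Matrix.diagonal d = H) ∧
    (S₁.map (fun x => (x : ℂ))).charpoly = H.charpoly ∧
    (S₂.map (fun x => (x : ℂ))).charpoly = H.charpoly := by
  subst hH hS₁ hS₂
  set d₁ : Fin n₁ ⊕ Fin n₂ → ℂ := Sum.elim (fun _ => 1) (fun _ => Complex.I) with hd₁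
  set d₂ : Fin n₁ ⊕ Fin n₂ → ℂ := Sum.elim (fun _ => Complex.I) (fun _ => 1) with hd₂
  have hmem₁ : ∀ x, d₁ x ∈ ({1, Complex.I} : Set ℂ) := by
    rintro (x | x) <;> simp [d₁]
  have hmem₂ : ∀ x, d₂ x ∈ ({1, Complex.I} : Set ℂ) := by
    rintro (x | x) <;> simp [d₂]
  have hconj₁ : (Matrix.diagonal d₁)ᴴ *
      (Matrix.fromBlocks A₁ B₁ B₁ᵀ A₂).map (fun x => (x : ℂ)) * Matrix.diagonal d₁ =
      Matrix.fromBlocks (A₁.map (fun x => (x : ℂ)))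
        (Complex.I • B₁.map (fun x => (x : ℂ)))
        (-Complex.I • B₁ᵀ.map (fun x => (x : ℂ))) (A₂.map (fun x => (x : ℂ))) := by
    rw [Matrix.diagonal_conjTranspose]
    ext i j
    rcases i with i | i <;> rcases j with j | j <;>
      simp [Matrix.mul_diagonal, Matrix.diagonal_mul, d₁, Matrix.map_apply, mul_comm,
        Complex.ext_iff]
  have hconj₂ : (Matrix.diagonal d₂)ᴴ *
      (Matrix.fromBlocks A₁ (-B₁) (-B₁ᵀ) A₂).map (fun x => (x : ℂ)) * Matrix.diagonal d₂ =
      Matrix.fromBlocks (A₁.map (fun x => (x : ℂ)))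
        (Complex.I • B₁.map (fun x => (x : ℂ)))
        (-Complex.I • B₁ᵀ.map (fun x => (x : ℂ))) (A₂.map (fun x => (x : ℂ))) := by
    rw [Matrix.diagonal_conjTranspose]
    ext i j
    rcases i with i | i <;> rcases j with j | j <;>
      simp [Matrix.mul_diagonal, Matrix.diagonal_mul, d₂, Matrix.map_apply, mul_comm,
        Complex.ext_iff]
  have hunit : ∀ (d : Fin n₁ ⊕ Fin n₂ → ℂ), (∀ x, d x ∈ ({1, Complex.I} : Set ℂ)) →
      (Matrix.diagonal d)ᴴ * Matrix.diagonal d = 1 ∧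
      Matrix.diagonal d * (Matrix.diagonal d)ᴴ = 1 := by
    intro d hd
    have h : ∀ x, star (d x) * d x = 1 := by
      intro x
      rcases hd x with h | h
      · rw [h]; simp
      · rw [Set.mem_singleton_iff] at h
        rw [h]
        simp [Complex.star_def, Complex.conj_I, Complex.I_mul_I]
    constructor
    · rw [Matrix.diagonal_conjTranspose, Matrix.diagonal_mul_diagonal, ← Matrix.diagonal_one]
      exact congrArg Matrix.diagonal (funext fun x => h x)
    · rw [Matrix.diagonal_conjTranspose, Matrix.diagonal_mul_diagonal, ← Matrix.diagonal_one]
      exact congrArg Matrix.diagonal (funext fun x => (mul_comm _ _).trans (h x))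
  obtain ⟨hu₁, hu₁'⟩ := hunit d₁ hmem₁
  obtain ⟨hu₂, hu₂'⟩ := hunit d₂ hmem₂
  refine ⟨⟨d₁, hmem₁, hconj₁⟩, ⟨d₂, hmem₂, hconj₂⟩, ?_, ?_⟩
  · rw [← hconj₁]
    exact (charpoly_conj_aux (Matrix.diagonal d₁) (Matrix.diagonal d₁)ᴴ _ hu₁ hu₁').symm
  · rw [← hconj₂]
    exact (charpoly_conj_aux (Matrix.diagonal d₂) (Matrix.diagonal d₂)ᴴ _ hu₂ hu₂').symm
end

section
/- Let H be the 8×8 Hermitian matrix S₈† given explicitly (rows: [0,−1,−1,i,1,0,0,0], [−1,0,i,−1,0,1,0,0], [−1,−i,0,1,0,0,1,0], [−i,−1,1,0,0,0,0,1], [1,0,0,0,0,1,1,−i], [0,1,0,0,1,0,−i,1], [0,0,1,0,1,i,0,−1], [0,0,0,1,i,1,−1,0]). Then all eigenvalues of H lie in the interval [−2, 2], and both H − 2I and H + 2I are singular, i.e. both 2 and −2 are eigenvalues of H; equivalently, the largest eigenvalue of H² is 4 and it is attained, so the spectral radius of H is exactly 2. -/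
set_option maxHeartbeats 4000000
set_option maxRecDepth 4000

open Matrix Complex

private lemma cv5 {α : Type*} {m : ℕ} (x : α) (u : Fin (m + 5) → α) :
    vecCons x u 5 = u 4 := rfl
private lemma cv6 {α : Type*} {m : ℕ} (x : α) (u : Fin (m + 6) → α) :
    vecCons x u 6 = u 5 := rfl
private lemma cv7 {α : Type*} {m : ℕ} (x : α) (u : Fin (m + 7) → α) :
    vecCons x u 7 = u 6 := rfl

private lemma not_unit_of_mulVec_eq_zero {A : Matrix (Fin 8) (Fin 8) ℂ}
    {v : Fin 8 → ℂ} (hv : A.mulVec v = 0) (hv0 : v ≠ 0) : ¬ IsUnit A := by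
  intro hA
  exact hv0 ((Matrix.mulVec_injective_iff_isUnit.mpr hA)
    (by rw [hv, Matrix.mulVec_zero]))

/-- The explicit Hermitian matrix `S₈†` has all its eigenvalues in `[−2, 2]`, and
both `2` and `−2` are eigenvalues; i.e., its spectral radius is exactly `2`. -/
theorem stmt_15 (H : Matrix (Fin 8) (Fin 8) ℂ)
    (hH : H = !![0, -1, -1, I, 1, 0, 0, 0;
                 -1, 0, I, -1, 0, 1, 0, 0;
                 -1, -I, 0, 1, 0, 0, 1, 0;
                 -I, -1, 1, 0, 0, 0, 0, 1;
                 1, 0, 0, 0, 0, 1, 1, -I;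
                 0, 1, 0, 0, 1, 0, -I, 1;
                 0, 0, 1, 0, 1, I, 0, -1;
                 0, 0, 0, 1, I, 1, -1, 0]) :
    (∀ μ ∈ spectrum ℂ H, ‖μ‖ ≤ 2) ∧
    (2 : ℂ) ∈ spectrum ℂ H ∧ (-2 : ℂ) ∈ spectrum ℂ H := by
  have hsq : H * H = (4 : ℂ) • 1 := by
    subst hH
    ext i j
    fin_cases i <;> fin_cases j <;>
      simp [Matrix.mul_apply, Fin.sum_univ_succ, Matrix.one_apply, cv5, cv6, cv7] <;>
      ring_nf
  refine ⟨?_, ?_, ?_⟩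
  · intro μ hμ
    by_contra hlt
    push_neg at hlt
    rw [spectrum.mem_iff] at hμ
    apply hμ
    have h4 : μ ^ 2 - 4 ≠ 0 := by
      intro h
      have hm : μ ^ 2 = 4 := by linear_combination h
      have : ‖μ‖ ^ 2 = 4 := by
        rw [← norm_pow, hm]; norm_num
      nlinarith [norm_nonneg μ]
    have hprod : (algebraMap ℂ (Matrix (Fin 8) (Fin 8) ℂ) μ - H) *
        (algebraMap ℂ (Matrix (Fin 8) (Fin 8) ℂ) μ + H) = (μ ^ 2 - 4) • 1 := by
      rw [Algebra.algebraMap_eq_smul_one]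
      rw [sub_mul, mul_add, mul_add, smul_mul_assoc, one_mul, smul_mul_assoc, one_mul,
        Matrix.mul_smul, mul_one, hsq]
      module
    apply IsUnit.of_mul_eq_one
      (b := (μ ^ 2 - 4)⁻¹ • (algebraMap ℂ (Matrix (Fin 8) (Fin 8) ℂ) μ + H))
    rw [Matrix.mul_smul, hprod, smul_smul, inv_mul_cancel₀ h4, one_smul]
  · rw [spectrum.mem_iff]
    refine not_unit_of_mulVec_eq_zero (v := ![2, -1, -1, -I, 1, 0, 0, 0]) ?_ ?_
    · subst hH
      ext i
      fin_cases i <;>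
        simp (config := { decide := true }) [Matrix.mulVec, dotProduct, Fin.sum_univ_succ, Matrix.sub_apply,
          Algebra.algebraMap_eq_smul_one, Matrix.one_apply, cv5, cv6, cv7,
          Complex.I_sq] <;> ring_nf
    · intro h
      have := congrFun h 0
      simp [cv5, cv6, cv7] at this
  · rw [spectrum.mem_iff]
    refine not_unit_of_mulVec_eq_zero (v := ![-2, -1, -1, -I, 1, 0, 0, 0]) ?_ ?_
    · subst hH
      ext i
      fin_cases i <;>
        simp (config := { decide := true }) [Matrix.mulVec, dotProduct, Fin.sum_univ_succ, Matrix.sub_apply,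
          Algebra.algebraMap_eq_smul_one, Matrix.one_apply, cv5, cv6, cv7, Complex.I_sq] <;> ring_nf
    · intro h
      have := congrFun h 0
      simp [cv5, cv6, cv7] at this
end

section
/- For every positive integer k, the set of 2k vectors {e_p + e_{p+1}, e_p − e_{p+1} : 1 ≤ p ≤ k} in ℂᵏ (indices mod k, so e_{k+1} = e₁) has displaced Gram matrix T₂ₖ^{(1)} (i.e., Gram matrix T₂ₖ^{(1)} + 2I), and the spectral radius of T₂ₖ^{(1)} is at most 2. -/
open Matrix

/-- The displaced Gram matrix `T₂ₖ⁽¹⁾` of the `2k` vectors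
`e_p ± e_{p+1}` (`1 ≤ p ≤ k`, indices mod `k`) in `ℂᵏ` has spectral radius at
most `2`. -/
theorem stmt_16 (k : ℕ) [NeZero k]
    (v : Fin k → Bool → (Fin k → ℂ))
    (hv : ∀ p s, v p s = fun j =>
      (if j = p then 1 else 0) + (if s then 1 else -1) * (if j = p + 1 then 1 else 0))
    (T : Matrix (Fin k × Bool) (Fin k × Bool) ℂ)
    (hT : ∀ a b, T a b =
      star (v a.1 a.2) ⬝ᵥ v b.1 b.2 - if a = b then 2 else 0) :
    ∀ μ ∈ spectrum ℂ T, ‖μ‖ ≤ 2 := by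
  have hvv : ∀ (p : Fin k) (s : Bool) (i : Fin k),
      v p s i = (if i = p then 1 else 0)
        + (if s then 1 else -1) * (if i = p + 1 then 1 else 0) := by
    intro p s i; rw [hv]
  have hstar : ∀ (p : Fin k) (s : Bool) (j : Fin k), star (v p s j) = v p s j := by
    intro p s j
    rw [hvv]
    cases s <;> simp [apply_ite (starRingEnd ℂ)]
  -- delta sums
  have delta : ∀ i j : Fin k,
      (∑ p : Fin k, (if i = p then (1:ℂ) else 0) * (if j = p then 1 else 0))
        = if i = j then 1 else 0 := by
    intro i j
    simp only [ite_mul, one_mul, zero_mul, Finset.sum_ite_eq, Finset.mem_univ, if_true]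
    by_cases h : i = j <;> simp [h, eq_comm]
  have delta' : ∀ i j : Fin k,
      (∑ p : Fin k, (if i = p + 1 then (1:ℂ) else 0) * (if j = p + 1 then 1 else 0))
        = if i = j then 1 else 0 := by
    intro i j
    rw [← delta i j]
    exact Fintype.sum_equiv (Equiv.addRight (1 : Fin k)) _ _ (fun p => rfl)
  -- key orthogonality: sum over all 2k vectors of outer products = 4 I
  have key : ∀ i j : Fin k,
      (∑ c : Fin k × Bool, v c.1 c.2 i * v c.1 c.2 j) = if i = j then 4 else 0 := by
    intro i j
    rw [Fintype.sum_prod_type]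
    have hrow : ∀ p : Fin k, (∑ s : Bool, v p s i * v p s j)
        = 2 * ((if i = p then 1 else 0) * (if j = p then 1 else 0))
        + 2 * ((if i = p + 1 then 1 else 0) * (if j = p + 1 then 1 else 0)) := by
      intro p
      rw [Fintype.sum_bool, hvv, hvv, hvv, hvv]
      simp only [if_true, Bool.false_eq_true, if_false]
      ring
    simp only [hrow]
    rw [Finset.sum_add_distrib, ← Finset.mul_sum, ← Finset.mul_sum, delta, delta']
    by_cases h : i = j <;> simp [h] <;> ring
  -- the Gram matrix entries
  have hTG : ∀ a b : Fin k × Bool, T a b =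
      (∑ i, v a.1 a.2 i * v b.1 b.2 i) - if a = b then 2 else 0 := by
    intro a b
    rw [hT]
    congr 1
    unfold dotProduct
    exact Finset.sum_congr rfl fun i _ => by rw [Pi.star_apply, hstar]
  -- T * T = 4 • 1
  have hT2 : T * T = (4 : ℂ) • (1 : Matrix (Fin k × Bool) (Fin k × Bool) ℂ) := by
    ext a b
    rw [mul_apply]
    have expand : ∀ c, T a c * T c b =
        (∑ i, v a.1 a.2 i * v c.1 c.2 i) * (∑ j, v c.1 c.2 j * v b.1 b.2 j)
        - (if a = c then 2 else 0) * (∑ j, v c.1 c.2 j * v b.1 b.2 j)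
        - (∑ i, v a.1 a.2 i * v c.1 c.2 i) * (if c = b then 2 else 0)
        + (if a = c then 2 else 0) * (if c = b then 2 else 0) := by
      intro c; rw [hTG, hTG]; ring
    simp only [expand]
    rw [Finset.sum_add_distrib, Finset.sum_sub_distrib, Finset.sum_sub_distrib]
    have h1 : (∑ c : Fin k × Bool,
        (∑ i, v a.1 a.2 i * v c.1 c.2 i) * (∑ j, v c.1 c.2 j * v b.1 b.2 j))
        = 4 * ∑ i, v a.1 a.2 i * v b.1 b.2 i := by
      calc (∑ c : Fin k × Bool,
            (∑ i, v a.1 a.2 i * v c.1 c.2 i) * (∑ j, v c.1 c.2 j * v b.1 b.2 j))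
          = ∑ c : Fin k × Bool, ∑ i, ∑ j,
              (v a.1 a.2 i * v b.1 b.2 j) * (v c.1 c.2 i * v c.1 c.2 j) := by
            refine Finset.sum_congr rfl fun c _ => ?_
            rw [Finset.sum_mul_sum]
            exact Finset.sum_congr rfl fun i _ => Finset.sum_congr rfl fun j _ => by ring
        _ = ∑ i, ∑ j, (v a.1 a.2 i * v b.1 b.2 j) *
              ∑ c : Fin k × Bool, (v c.1 c.2 i * v c.1 c.2 j) := by
            rw [Finset.sum_comm]
            refine Finset.sum_congr rfl fun i _ => ?_
            rw [Finset.sum_comm]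
            exact Finset.sum_congr rfl fun j _ => (Finset.mul_sum _ _ _).symm
        _ = ∑ i, ∑ j, (v a.1 a.2 i * v b.1 b.2 j) * (if i = j then 4 else 0) := by
            simp only [key]
        _ = 4 * ∑ i, v a.1 a.2 i * v b.1 b.2 i := by
            rw [Finset.mul_sum]
            refine Finset.sum_congr rfl fun i _ => ?_
            rw [Finset.sum_eq_single i]
            · simp; ring
            · intro j _ hj; simp [Ne.symm hj]
            · intro h; exact absurd (Finset.mem_univ i) h
    have h2 : (∑ c : Fin k × Bool,
        (if a = c then (2:ℂ) else 0) * (∑ j, v c.1 c.2 j * v b.1 b.2 j))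
        = 2 * ∑ j, v a.1 a.2 j * v b.1 b.2 j := by
      rw [Finset.sum_eq_single a]
      · simp
      · intro c _ hc; simp [Ne.symm hc]
      · intro h; exact absurd (Finset.mem_univ a) h
    have h3 : (∑ c : Fin k × Bool,
        (∑ i, v a.1 a.2 i * v c.1 c.2 i) * (if c = b then (2:ℂ) else 0))
        = 2 * ∑ i, v a.1 a.2 i * v b.1 b.2 i := by
      rw [Finset.sum_eq_single b]
      · simp [mul_comm]
      · intro c _ hc; simp [hc]
      · intro h; exact absurd (Finset.mem_univ b) h
    have h4 : (∑ c : Fin k × Bool,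
        (if a = c then (2:ℂ) else 0) * (if c = b then 2 else 0))
        = if a = b then 4 else 0 := by
      rw [Finset.sum_eq_single a]
      · by_cases h : a = b <;> simp [h] <;> norm_num
      · intro c _ hc; simp [Ne.symm hc]
      · intro h; exact absurd (Finset.mem_univ a) h
    rw [h1, h2, h3, h4]
    simp only [Matrix.smul_apply, Matrix.one_apply, smul_eq_mul]
    by_cases h : a = b <;> simp [h] <;> ring
  -- spectral argument
  intro μ hμ
  have hsq : μ ^ 2 = 4 := by
    by_contra hne
    rw [spectrum.mem_iff] at hμ
    apply hμ
    set u := algebraMap ℂ (Matrix (Fin k × Bool) (Fin k × Bool) ℂ) μ with hu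
    have hc : Commute u T := (Algebra.commutes μ T)
    have hcomm : Commute (u - T) (u + T) :=
      ((Commute.refl u).add_right hc).sub_left (hc.symm.add_right (Commute.refl T))
    have hprod : (u - T) * (u + T) =
        algebraMap ℂ (Matrix (Fin k × Bool) (Fin k × Bool) ℂ) (μ ^ 2 - 4) := by
      have : (u - T) * (u + T) = u * u - T * T := by
        rw [sub_mul, mul_add, mul_add, hc.eq]
        abel
      rw [this, hT2, map_sub]
      congr 1
      · rw [hu, ← _root_.map_mul, ← sq]
      · exact (Algebra.algebraMap_eq_smul_one (4:ℂ)).symm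
    have hunit : IsUnit ((u - T) * (u + T)) := by
      rw [hprod]
      exact (isUnit_iff_ne_zero.mpr (sub_ne_zero.mpr hne)).map
        (algebraMap ℂ (Matrix (Fin k × Bool) (Fin k × Bool) ℂ))
    exact (hcomm.isUnit_mul_iff.mp hunit).1
  have : ‖μ‖ ^ 2 = 4 := by
    have := congrArg norm hsq
    rwa [norm_pow, Complex.norm_ofNat] at this
  nlinarith [norm_nonneg μ]
end
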